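/- arXiv:1704.00926 — 2 statements merged into one kernel-verified Lean document; each statement's English description precedes it below -/
import Mathlib

section
/- A connection ∇' satisfies ∇'J = 0 if and only if ∇' = ∇⁰ + Q where Q is a (1,2)-tensor satisfying Q(X, JY) = J·Q(X,Y) for all X, Y, with ∇⁰_X Y = ∇_X Y − (1/2)(∇_X J)(JY) for a fixed connection ∇. -/
/-!
Writing `(∇_X J) Z = ∇_X (J Z) - J (∇_X Z)`, the condition `∇'J = 0` is linear in `∇'`, so the
connections with `∇'J = 0` form a coset of the (1,2)-tensors `Q` with `Q(X, JY) = J Q(X, Y)` as soon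
as one of them is known. Using `J² = 1`, `∇⁰_X Y = ½ (∇_X Y + J ∇_X (JY))`, which visibly commutes
with `J` in `Y`; hence `∇⁰` is such a connection.
-/

namespace LinearMap

variable {R V : Type*} [CommRing R] [AddCommGroup V] [Module R V]

/-- `covDerivEnd D J X Z = (D_X J) Z` for a connection `D` given as a bilinear map. -/
def covDerivEnd (D : V →ₗ[R] V →ₗ[R] V) (J : V →ₗ[R] V) : V →ₗ[R] V →ₗ[R] V :=
  D.compl₂ J - D.compr₂ J

@[simp]
theorem covDerivEnd_apply (D : V →ₗ[R] V →ₗ[R] V) (J : V →ₗ[R] V) (X Z : V) :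
    covDerivEnd D J X Z = D X (J Z) - J (D X Z) :=
  rfl

theorem covDerivEnd_eq_zero_iff {D : V →ₗ[R] V →ₗ[R] V} {J : V →ₗ[R] V} :
    covDerivEnd D J = 0 ↔ ∀ X Y, D X (J Y) = J (D X Y) := by
  simp only [ext_iff₂, covDerivEnd_apply, zero_apply, sub_eq_zero]

theorem covDerivEnd_add (D E : V →ₗ[R] V →ₗ[R] V) (J : V →ₗ[R] V) :
    covDerivEnd (D + E) J = covDerivEnd D J + covDerivEnd E J := by
  ext X Z
  simp only [covDerivEnd_apply, add_apply, map_add]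
  abel

theorem covDerivEnd_sub (D E : V →ₗ[R] V →ₗ[R] V) (J : V →ₗ[R] V) :
    covDerivEnd (D - E) J = covDerivEnd D J - covDerivEnd E J := by
  ext X Z
  simp only [covDerivEnd_apply, sub_apply, map_sub]
  abel

theorem covDerivEnd_eq_zero_iff_exists_add {D₀ D : V →ₗ[R] V →ₗ[R] V} {J : V →ₗ[R] V}
    (h₀ : covDerivEnd D₀ J = 0) :
    covDerivEnd D J = 0 ↔ ∃ Q, covDerivEnd Q J = 0 ∧ D = D₀ + Q := by
  constructor
  · intro h
    exact ⟨D - D₀, by rw [covDerivEnd_sub, h, h₀, sub_zero], (add_sub_cancel D₀ D).symm⟩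
  · rintro ⟨Q, hQ, rfl⟩
    rw [covDerivEnd_add, h₀, hQ, add_zero]

end LinearMap

section FirstCanonical

open LinearMap

variable {R V : Type*} [Field R] [AddCommGroup V] [Module R V]

def firstCanonical (D : V →ₗ[R] V →ₗ[R] V) (J : V →ₗ[R] V) : V →ₗ[R] V →ₗ[R] V :=
  D - (1 / 2 : R) • (covDerivEnd D J).compl₂ J

@[simp]
theorem firstCanonical_apply (D : V →ₗ[R] V →ₗ[R] V) (J : V →ₗ[R] V) (X Y : V) :
    firstCanonical D J X Y = D X Y - (1 / 2 : R) • (D X (J (J Y)) - J (D X (J Y))) :=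
  rfl

theorem covDerivEnd_firstCanonical [NeZero (2 : R)] (D : V →ₗ[R] V →ₗ[R] V) {J : V →ₗ[R] V}
    (hJ : J ∘ₗ J = LinearMap.id) : covDerivEnd (firstCanonical D J) J = 0 := by
  have hJJ (v : V) : J (J v) = v := LinearMap.congr_fun hJ v
  ext X Y
  simp only [covDerivEnd_apply, firstCanonical_apply, hJJ, map_sub, map_smul, LinearMap.zero_apply]
  calc _ = (1 - 2 * (1 / 2 : R)) • (D X (J Y) - J (D X Y)) := by module
    _ = 0 := by rw [mul_one_div_cancel two_ne_zero, sub_self, zero_smul]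

end FirstCanonical

open LinearMap in
/-- A connection `∇'` satisfies `∇'J = 0` iff `∇' = ∇⁰ + Q` for a (1,2)-tensor `Q` with
`Q(X,JY) = J·Q(X,Y)`, where `∇⁰_X Y = ∇_X Y − (1/2)(∇_X J)(JY)` for a fixed
connection `∇`. Connections are modelled as bilinear maps on vector fields, so their
difference is a bilinear (1,2)-tensor. -/
theorem adapted_iff_firstCanonical_plus_Q {V : Type*} [AddCommGroup V] [Module ℝ V]
    (J : V →ₗ[ℝ] V) (hJ : J ∘ₗ J = LinearMap.id)
    (nab : V →ₗ[ℝ] V →ₗ[ℝ] V) (nab' : V →ₗ[ℝ] V →ₗ[ℝ] V) :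
    (∀ X Y : V, nab' X (J Y) = J (nab' X Y)) ↔
      ∃ Q : V →ₗ[ℝ] V →ₗ[ℝ] V,
        (∀ X Y : V, Q X (J Y) = J (Q X Y)) ∧
        (∀ X Y : V, nab' X Y
          = nab X Y - ((1 : ℝ)/2) • (nab X (J (J Y)) - J (nab X (J Y))) + Q X Y) := by
  rw [← covDerivEnd_eq_zero_iff,
    covDerivEnd_eq_zero_iff_exists_add (covDerivEnd_firstCanonical nab hJ)]
  simp only [covDerivEnd_eq_zero_iff, ext_iff₂ (f := nab'), LinearMap.add_apply, firstCanonical_apply]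
end

section
/- The first prolongation of the Lie algebra o(r) ⊕ o(s) (block-diagonal skew-symmetric matrices inside gl(r+s, ℝ)) is zero: if S : ℝⁿ → o(r) ⊕ o(s) is linear and S(v)w = S(w)v for all v, w ∈ ℝⁿ, then S = 0. -/
/-!
Write `f a b c = S(e_a)_{bc}`. Skew-symmetry of the values makes `f` antisymmetric in its last
two indices, and `S(v)w = S(w)v` makes it symmetric in its first and third. Alternating the two
symmetries three times each carries `f a b c` to `-f a b c`, so `f = 0`.
-/

theorem eq_zero_of_antisymm_of_symm {ι M : Type*} [AddGroup M] [IsAddTorsionFree M]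
    (f : ι → ι → ι → M) (hanti : ∀ a b c, f a b c = -f a c b)
    (hsymm : ∀ a b c, f a b c = f c b a) : f = 0 := by
  funext a b c
  refine self_eq_neg.mp ?_
  calc f a b c = -f a c b := hanti a b c
    _ = -f b c a := by rw [hsymm a c b]
    _ = f b a c := by rw [hanti b c a, neg_neg]
    _ = f c a b := hsymm b a c
    _ = -f c b a := hanti c a b
    _ = -f a b c := by rw [hsymm c b a]

namespace Matrix

theorem linearMap_eq_zero_of_transpose_eq_neg_of_mulVec_comm
    {ι R : Type*} [Fintype ι] [DecidableEq ι] [Ring R] [IsAddTorsionFree R]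
    (S : (ι → R) →ₗ[R] Matrix ι ι R) (hskew : ∀ v, (S v)ᵀ = -S v)
    (hsymm : ∀ v w, S v *ᵥ w = S w *ᵥ v) : S = 0 := by
  have hanti : ∀ a b c, S (Pi.single a 1) b c = -S (Pi.single a 1) c b := fun a b c => by
    simpa using congrFun (congrFun (hskew (Pi.single a 1)) c) b
  have hcomm : ∀ a b c, S (Pi.single a 1) b c = S (Pi.single c 1) b a := fun a b c => by
    simpa [mulVec_single_one] using
      congrFun (hsymm (Pi.single a 1) (Pi.single c 1)) b
  have hzero := eq_zero_of_antisymm_of_symm (fun a b c => S (Pi.single a 1) b c) hanti hcomm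
  refine (Pi.basisFun R ι).ext fun a => ?_
  ext b c
  simpa using congrFun (congrFun (congrFun hzero a) b) c

end Matrix

theorem first_prolongation_orthogonal_sum_eq_zero_general (r s : ℕ)
    (S : ((Fin r ⊕ Fin s) → ℝ) →ₗ[ℝ] Matrix (Fin r ⊕ Fin s) (Fin r ⊕ Fin s) ℝ)
    (hskew : ∀ v, (S v).transpose = -(S v))
    (hsymm : ∀ v w, (S v).mulVec w = (S w).mulVec v) :
    S = 0 :=
  Matrix.linearMap_eq_zero_of_transpose_eq_neg_of_mulVec_comm S hskew hsymm

/-- The first prolongation of `o(r) ⊕ o(s)` (block-diagonal skew-symmetric matrices in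
`gl(r+s,ℝ)`, indexed by `Fin r ⊕ Fin s`) vanishes: if `S : ℝⁿ → o(r) ⊕ o(s)` is linear
and `S(v)w = S(w)v` for all `v, w`, then `S = 0`. -/
theorem first_prolongation_orthogonal_sum_eq_zero (r s : ℕ)
    (S : ((Fin r ⊕ Fin s) → ℝ) →ₗ[ℝ] Matrix (Fin r ⊕ Fin s) (Fin r ⊕ Fin s) ℝ)
    (hskew : ∀ v, (S v).transpose = -(S v))
    (hblock : ∀ v (i : Fin r) (j : Fin s),
      S v (Sum.inl i) (Sum.inr j) = 0 ∧ S v (Sum.inr j) (Sum.inl i) = 0)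
    (hsymm : ∀ v w, (S v).mulVec w = (S w).mulVec v) :
    S = 0 :=
  first_prolongation_orthogonal_sum_eq_zero_general r s S hskew hsymm
end
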